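/- arXiv:2512.05867 — 2 statements merged into one kernel-verified Lean document; each statement's English description precedes it below -/
import Mathlib

section
/- Let n ∈ (0,2), θ = (1/π)·arccos(n/2), γ₊ = 2^{3/2}·cos(πθ/2), γ₋ = γ₊ − (2^{3/2}/θ)·sin(πθ/2), and let r₊ and k be as in the context. For u < 0 define f₋(u) = ∫_0^∞ r₊(v)·k(u−v) dv (an absolutely convergent integral, since u − v < 0 avoids the singularity of k). Then there exists a constant C > 0 such that |f₋(u)| ≤ C·(1 + log(1/|u|)) for all u ∈ (−1, 0), and |f₋(u)| ≤ C·e^{u} for all u ≤ −1. -/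
open Real MeasureTheory Filter Topology

/-- θ = (1/π)·arccos(n/2). -/
noncomputable def theta (n : ℝ) : ℝ := Real.arccos (n / 2) / π

/-- γ₊ = 2^{3/2}·cos(πθ/2). -/
noncomputable def gammaP (n : ℝ) : ℝ := (2 : ℝ) ^ ((3 : ℝ) / 2) * Real.cos (π * theta n / 2)

/-- γ₋ = γ₊ − (2^{3/2}/θ)·sin(πθ/2). -/
noncomputable def gammaM (n : ℝ) : ℝ :=
  gammaP n - ((2 : ℝ) ^ ((3 : ℝ) / 2) / theta n) * Real.sin (π * theta n / 2)

/-- r₊(v) = ((γ₊−γ₋)/(√2·πθ)) · e^{−3v} · [ (e^{2v}+√(e^{4v}−1))^θ − (e^{2v}−√(e^{4v}−1))^θ ]. -/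
noncomputable def rPlus (n : ℝ) (v : ℝ) : ℝ :=
  ((gammaP n - gammaM n) / (Real.sqrt 2 * π * theta n)) * Real.exp (-3 * v) *
    ((Real.exp (2 * v) + Real.sqrt (Real.exp (4 * v) - 1)) ^ theta n -
      (Real.exp (2 * v) - Real.sqrt (Real.exp (4 * v) - 1)) ^ theta n)

/-- The kernel k(z) = 1/sinh(z) + (n/2)/cosh(z). -/
noncomputable def kker (n : ℝ) (z : ℝ) : ℝ := 1 / Real.sinh z + (n / 2) / Real.cosh z

/-- f₋(u) = ∫_0^∞ r₊(v)·k(u−v) dv for u < 0. -/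
noncomputable def fMinus (n : ℝ) (u : ℝ) : ℝ :=
  ∫ v in Set.Ioi (0 : ℝ), rPlus n v * kker n (u - v)

private lemma real_rpow_add_le {x y p : ℝ} (hx : 0 ≤ x) (hy : 0 ≤ y) (hp : 0 ≤ p)
    (hp1 : p ≤ 1) : (x + y) ^ p ≤ x ^ p + y ^ p := by
  have h := NNReal.rpow_add_le_add_rpow x.toNNReal y.toNNReal hp hp1
  have h2 := NNReal.coe_le_coe.2 h
  push_cast at h2
  rwa [Real.coe_toNNReal _ hx, Real.coe_toNNReal _ hy] at h2

set_option maxHeartbeats 1000000 in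
/-- Bounds on f₋: |f₋(u)| ≤ C(1 + log(1/|u|)) for u ∈ (−1,0) and |f₋(u)| ≤ C·e^u
for u ≤ −1. -/
theorem fMinus_bounds (n : ℝ) (hn : n ∈ Set.Ioo (0 : ℝ) 2) :
    ∃ C > 0,
      (∀ u ∈ Set.Ioo (-1 : ℝ) 0, |fMinus n u| ≤ C * (1 + Real.log (1 / |u|))) ∧
      (∀ u ≤ (-1 : ℝ), |fMinus n u| ≤ C * Real.exp u) := by
  obtain ⟨hn0, hn2⟩ := hn
  have hπ := Real.pi_pos
  have hθpos : 0 < theta n := div_pos (Real.arccos_pos.2 (by linarith)) hπ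
  have hθhalf : 2 * theta n ≤ 1 := by
    have h1 : Real.arccos (n / 2) ≤ π / 2 := Real.arccos_le_pi_div_two.2 (by linarith)
    have h2 : theta n ≤ 1 / 2 := by
      rw [theta, div_le_iff₀ hπ]; linarith
    linarith
  set θ := theta n with hθdef
  set A := |(gammaP n - gammaM n) / (Real.sqrt 2 * π * θ)| with hA
  set B := A * ((2 : ℝ) ^ θ * (4 : ℝ) ^ (θ / 2)) with hBdef
  have hB0 : 0 ≤ B := by positivity
  -- pointwise bound on rPlus
  have hR : ∀ v : ℝ, 0 < v → |rPlus n v| ≤ B * v ^ (θ / 2) * Real.exp (-2 * v) := by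
    intro v hv
    set s := Real.sqrt (Real.exp (4 * v) - 1) with hs
    have hE1 : (1 : ℝ) ≤ Real.exp (4 * v) := Real.one_le_exp (by linarith)
    have hs0 : 0 ≤ s := Real.sqrt_nonneg _
    have hsle : s ≤ Real.exp (2 * v) := by
      have h1 : Real.exp (4 * v) - 1 ≤ Real.exp (2 * v) * Real.exp (2 * v) := by
        rw [← Real.exp_add]
        have : (2 : ℝ) * v + 2 * v = 4 * v := by ring
        rw [this]; linarith
      calc s ≤ Real.sqrt (Real.exp (2 * v) * Real.exp (2 * v)) := Real.sqrt_le_sqrt h1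
        _ = Real.exp (2 * v) := Real.sqrt_mul_self (Real.exp_nonneg _)
    set a := Real.exp (2 * v) + s with ha
    set b := Real.exp (2 * v) - s with hb
    have hb0 : 0 ≤ b := by rw [hb]; linarith
    have hba : b ≤ a := by rw [ha, hb]; linarith
    have hbr0 : 0 ≤ a ^ θ - b ^ θ :=
      sub_nonneg.2 (Real.rpow_le_rpow hb0 hba hθpos.le)
    have h1 : a ^ θ - b ^ θ ≤ (2 * s) ^ θ := by
      have hab : a = b + 2 * s := by rw [ha, hb]; ring
      have h2 : (b + 2 * s) ^ θ ≤ b ^ θ + (2 * s) ^ θ :=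
        real_rpow_add_le hb0 (by linarith) hθpos.le (by linarith)
      rw [hab]; linarith
    have h3 : (2 * s) ^ θ = 2 ^ θ * s ^ θ := Real.mul_rpow (by norm_num) hs0
    have h4 : s ^ θ = (Real.exp (4 * v) - 1) ^ (θ / 2) := by
      rw [hs, Real.sqrt_eq_rpow, ← Real.rpow_mul (by linarith)]
      ring_nf
    have h5 : Real.exp (4 * v) - 1 ≤ 4 * v * Real.exp (4 * v) := by
      have hEe : Real.exp (4 * v) * Real.exp (-(4 * v)) = 1 := by
        rw [← Real.exp_add]; simp
      have h6 := Real.add_one_le_exp (-(4 * v))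
      nlinarith [Real.exp_pos (4 * v)]
    have h6 : (Real.exp (4 * v) - 1) ^ (θ / 2) ≤
        (4 : ℝ) ^ (θ / 2) * v ^ (θ / 2) * Real.exp (2 * θ * v) := by
      calc (Real.exp (4 * v) - 1) ^ (θ / 2)
          ≤ (4 * v * Real.exp (4 * v)) ^ (θ / 2) :=
            Real.rpow_le_rpow (by linarith) h5 (by positivity)
        _ = (4 : ℝ) ^ (θ / 2) * v ^ (θ / 2) * (Real.exp (4 * v)) ^ (θ / 2) := by
            rw [Real.mul_rpow (by positivity) (Real.exp_nonneg _),
              Real.mul_rpow (by norm_num) hv.le]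
        _ = (4 : ℝ) ^ (θ / 2) * v ^ (θ / 2) * Real.exp (2 * θ * v) := by
            rw [← Real.exp_mul]; ring_nf
    have hval : rPlus n v =
        ((gammaP n - gammaM n) / (Real.sqrt 2 * π * θ)) * Real.exp (-3 * v) *
          (a ^ θ - b ^ θ) := rfl
    have habs : |rPlus n v| = A * (Real.exp (-3 * v) * (a ^ θ - b ^ θ)) := by
      rw [hval, abs_mul, abs_mul, abs_of_nonneg (Real.exp_nonneg _), abs_of_nonneg hbr0, hA,
        mul_assoc]
    have hbr : a ^ θ - b ^ θ ≤
        2 ^ θ * ((4 : ℝ) ^ (θ / 2) * v ^ (θ / 2) * Real.exp (2 * θ * v)) := by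
      calc a ^ θ - b ^ θ ≤ (2 * s) ^ θ := h1
        _ = 2 ^ θ * s ^ θ := h3
        _ = 2 ^ θ * (Real.exp (4 * v) - 1) ^ (θ / 2) := by rw [h4]
        _ ≤ 2 ^ θ * ((4 : ℝ) ^ (θ / 2) * v ^ (θ / 2) * Real.exp (2 * θ * v)) := by
            apply mul_le_mul_of_nonneg_left h6 (by positivity)
    have hexp : Real.exp (-3 * v) * Real.exp (2 * θ * v) ≤ Real.exp (-2 * v) := by
      rw [← Real.exp_add]
      apply Real.exp_le_exp.2
      nlinarith
    have hvθ : (0 : ℝ) ≤ v ^ (θ / 2) := Real.rpow_nonneg hv.le _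
    calc |rPlus n v| = A * (Real.exp (-3 * v) * (a ^ θ - b ^ θ)) := habs
      _ ≤ A * (Real.exp (-3 * v) *
          (2 ^ θ * ((4 : ℝ) ^ (θ / 2) * v ^ (θ / 2) * Real.exp (2 * θ * v)))) := by
          apply mul_le_mul_of_nonneg_left _ (abs_nonneg _)
          exact mul_le_mul_of_nonneg_left hbr (Real.exp_nonneg _)
      _ = (A * ((2 : ℝ) ^ θ * (4 : ℝ) ^ (θ / 2)) * v ^ (θ / 2)) *
          (Real.exp (-3 * v) * Real.exp (2 * θ * v)) := by ring
      _ ≤ (A * ((2 : ℝ) ^ θ * (4 : ℝ) ^ (θ / 2)) * v ^ (θ / 2)) * Real.exp (-2 * v) := by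
          apply mul_le_mul_of_nonneg_left hexp (by positivity)
      _ = B * v ^ (θ / 2) * Real.exp (-2 * v) := by rw [hBdef]
  -- kernel bounds
  have hK1 : ∀ x : ℝ, 0 < x → |kker n (-x)| ≤ 1 / x + 1 := by
    intro x hx
    have hsinh : x ≤ Real.sinh x := Real.self_le_sinh_iff.2 hx.le
    have hsp : 0 < Real.sinh x := by linarith
    have hcosh : 1 ≤ Real.cosh x := Real.one_le_cosh x
    have hcp : 0 < Real.cosh x := by linarith
    rw [kker, Real.sinh_neg, Real.cosh_neg]
    refine (abs_add_le _ _).trans ?_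
    have e1 : |1 / -Real.sinh x| ≤ 1 / x := by
      rw [div_neg, abs_neg, abs_div, abs_one, abs_of_pos hsp]
      exact one_div_le_one_div_of_le hx hsinh
    have e2 : |n / 2 / Real.cosh x| ≤ 1 := by
      rw [abs_div, abs_of_pos hcp, abs_of_pos (by linarith : (0:ℝ) < n / 2)]
      rw [div_le_one hcp]; linarith
    linarith
  have hK2 : ∀ x : ℝ, 1 ≤ x → |kker n (-x)| ≤ 6 * Real.exp (-x) := by
    intro x hx
    have hex : (2 : ℝ) ≤ Real.exp x := by
      have h1 := Real.add_one_le_exp 1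
      have h2 := Real.exp_le_exp.2 hx
      linarith
    have hen1 : Real.exp (-x) ≤ 1 := Real.exp_le_one_iff.2 (by linarith)
    have hprod : Real.exp x * Real.exp (-x) = 1 := by rw [← Real.exp_add]; simp
    have hsinh : Real.exp x / 4 ≤ Real.sinh x := by
      rw [Real.sinh_eq]; nlinarith
    have hsp : 0 < Real.sinh x := by nlinarith [Real.exp_pos x]
    have hcosh : Real.exp x / 2 ≤ Real.cosh x := by
      rw [Real.cosh_eq]; nlinarith [Real.exp_pos (-x)]
    have hcp : 0 < Real.cosh x := by nlinarith [Real.exp_pos x]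
    rw [kker, Real.sinh_neg, Real.cosh_neg]
    refine (abs_add_le _ _).trans ?_
    have e1 : |1 / -Real.sinh x| ≤ 4 * Real.exp (-x) := by
      rw [div_neg, abs_neg, abs_div, abs_one, abs_of_pos hsp]
      have h := one_div_le_one_div_of_le (by positivity : (0:ℝ) < Real.exp x / 4) hsinh
      rw [one_div_div] at h
      calc 1 / Real.sinh x ≤ 4 / Real.exp x := h
        _ = 4 * Real.exp (-x) := by rw [Real.exp_neg]; ring
    have e2 : |n / 2 / Real.cosh x| ≤ 2 * Real.exp (-x) := by
      rw [abs_div, abs_of_pos hcp, abs_of_pos (by linarith : (0:ℝ) < n / 2)]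
      have h1 : n / 2 / Real.cosh x ≤ 2 / Real.exp x := by
        rw [div_le_div_iff₀ hcp (Real.exp_pos x)]
        nlinarith
      calc n / 2 / Real.cosh x ≤ 2 / Real.exp x := h1
        _ = 2 * Real.exp (-x) := by rw [Real.exp_neg]; ring
    linarith
  -- measurability of the integrand
  have c1 : Continuous fun v : ℝ => Real.exp (2 * v) :=
    Real.continuous_exp.comp (continuous_const.mul continuous_id)
  have c2 : Continuous fun v : ℝ => Real.sqrt (Real.exp (4 * v) - 1) :=
    Real.continuous_sqrt.comp
      ((Real.continuous_exp.comp (continuous_const.mul continuous_id)).sub continuous_const)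
  have c3 : Continuous (rPlus n) := by
    unfold rPlus
    exact (continuous_const.mul
        (Real.continuous_exp.comp (continuous_const.mul continuous_id))).mul
      (((c1.add c2).rpow_const fun x => Or.inr hθpos.le).sub
        ((c1.sub c2).rpow_const fun x => Or.inr hθpos.le))
  have mk : Measurable (kker n) := by
    unfold kker
    exact (measurable_const.div Real.continuous_sinh.measurable).add
      (measurable_const.div Real.continuous_cosh.measurable)
  have hmeas : ∀ u : ℝ, AEStronglyMeasurable (fun v => rPlus n v * kker n (u - v))
      (volume.restrict (Set.Ioi (0 : ℝ))) := fun u =>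
    (c3.measurable.mul (mk.comp (measurable_const.sub measurable_id))).aestronglyMeasurable
  -- dominating function
  have hI1 : IntegrableOn (fun v => Real.exp (-v) * v ^ (θ / 2 - 1)) (Set.Ioi (0 : ℝ)) :=
    Real.GammaIntegral_convergent (by positivity)
  have hI2 : IntegrableOn (fun v => Real.exp (-v) * v ^ (θ / 2)) (Set.Ioi (0 : ℝ)) := by
    have h := Real.GammaIntegral_convergent (show (0 : ℝ) < θ / 2 + 1 by positivity)
    simpa using h
  set g : ℝ → ℝ := fun v => B * (Real.exp (-v) * v ^ (θ / 2 - 1) + Real.exp (-v) * v ^ (θ / 2))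
    with hgdef
  have hg_int : IntegrableOn g (Set.Ioi (0 : ℝ)) := (hI1.add hI2).const_mul B
  set C0 := ∫ v in Set.Ioi (0 : ℝ), g v with hC0def
  have hg_nonneg : ∀ v ∈ Set.Ioi (0 : ℝ), 0 ≤ g v := by
    intro v hv
    have hv0 : (0 : ℝ) < v := hv
    apply mul_nonneg hB0
    have := Real.rpow_nonneg hv0.le (θ / 2 - 1)
    have := Real.rpow_nonneg hv0.le (θ / 2)
    positivity
  have hC0 : 0 ≤ C0 := setIntegral_nonneg measurableSet_Ioi hg_nonneg
  -- pointwise domination in case u < 0 (for the first bound)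
  have key1 : ∀ u : ℝ, u < 0 → |fMinus n u| ≤ C0 := by
    intro u hu0
    have hb : ∀ v ∈ Set.Ioi (0 : ℝ), ‖rPlus n v * kker n (u - v)‖ ≤ g v := by
      intro v hv
      have hv0 : (0 : ℝ) < v := hv
      have hx : 0 < v - u := by linarith
      have hk := hK1 (v - u) hx
      have hvu : u - v = -(v - u) := by ring
      rw [hvu] at *
      have hkk : |kker n (-(v - u))| ≤ 1 / (v - u) + 1 := hk
      have hvθ : (0 : ℝ) ≤ v ^ (θ / 2) := Real.rpow_nonneg hv0.le _
      rw [Real.norm_eq_abs, abs_mul]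
      have step1 : |rPlus n v| * |kker n (-(v - u))| ≤
          (B * v ^ (θ / 2) * Real.exp (-2 * v)) * (1 / (v - u) + 1) :=
        mul_le_mul (hR v hv0) hkk (abs_nonneg _) (by positivity)
      refine step1.trans ?_
      have e1 : Real.exp (-2 * v) ≤ Real.exp (-v) := Real.exp_le_exp.2 (by linarith)
      have e2 : 1 / (v - u) ≤ 1 / v := one_div_le_one_div_of_le hv0 (by linarith)
      have t1 : v ^ (θ / 2) * Real.exp (-2 * v) * (1 / (v - u)) ≤
          Real.exp (-v) * v ^ (θ / 2 - 1) := by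
        calc v ^ (θ / 2) * Real.exp (-2 * v) * (1 / (v - u))
            ≤ v ^ (θ / 2) * Real.exp (-v) * (1 / v) := by
              apply mul_le_mul (mul_le_mul_of_nonneg_left e1 hvθ) e2 (by positivity)
                (by positivity)
          _ = Real.exp (-v) * v ^ (θ / 2 - 1) := by
              rw [Real.rpow_sub hv0, Real.rpow_one]; ring
      have t2 : v ^ (θ / 2) * Real.exp (-2 * v) ≤ Real.exp (-v) * v ^ (θ / 2) := by
        rw [mul_comm (Real.exp (-v))]
        exact mul_le_mul_of_nonneg_left e1 hvθ
      calc B * v ^ (θ / 2) * Real.exp (-2 * v) * (1 / (v - u) + 1)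
          = B * (v ^ (θ / 2) * Real.exp (-2 * v) * (1 / (v - u)) +
              v ^ (θ / 2) * Real.exp (-2 * v)) := by ring
        _ ≤ B * (Real.exp (-v) * v ^ (θ / 2 - 1) + Real.exp (-v) * v ^ (θ / 2)) := by
            apply mul_le_mul_of_nonneg_left (add_le_add t1 t2) hB0
        _ = g v := rfl
    have h := norm_integral_le_of_norm_le hg_int
      ((ae_restrict_iff' measurableSet_Ioi).2 (ae_of_all _ hb))
    simpa [fMinus, Real.norm_eq_abs] using h
  -- case u ≤ -1
  have key2 : ∀ u : ℝ, u ≤ -1 → |fMinus n u| ≤ Real.exp u * (6 * C0) := by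
    intro u hu
    have hgi : Integrable (fun v => 6 * Real.exp u * g v)
        (volume.restrict (Set.Ioi (0 : ℝ))) := hg_int.const_mul _
    have hb : ∀ v ∈ Set.Ioi (0 : ℝ), ‖rPlus n v * kker n (u - v)‖ ≤ 6 * Real.exp u * g v := by
      intro v hv
      have hv0 : (0 : ℝ) < v := hv
      have hx : 1 ≤ v - u := by linarith
      have hk := hK2 (v - u) hx
      have hvu : u - v = -(v - u) := by ring
      rw [hvu]
      have hvθ : (0 : ℝ) ≤ v ^ (θ / 2) := Real.rpow_nonneg hv0.le _
      rw [Real.norm_eq_abs, abs_mul]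
      have step1 : |rPlus n v| * |kker n (-(v - u))| ≤
          (B * v ^ (θ / 2) * Real.exp (-2 * v)) * (6 * Real.exp (-(v - u))) :=
        mul_le_mul (hR v hv0) hk (abs_nonneg _)
          (mul_nonneg (mul_nonneg hB0 hvθ) (Real.exp_nonneg _))
      refine step1.trans ?_
      have hsplit : Real.exp (-(v - u)) = Real.exp u * Real.exp (-v) := by
        rw [← Real.exp_add]; ring_nf
      have e1 : Real.exp (-2 * v) ≤ 1 := Real.exp_le_one_iff.2 (by linarith)
      have hgv : B * (Real.exp (-v) * v ^ (θ / 2)) ≤ g v := by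
        have h1 : (0 : ℝ) ≤ Real.exp (-v) * v ^ (θ / 2 - 1) := by
          have := Real.rpow_nonneg hv0.le (θ / 2 - 1); positivity
        rw [hgdef]
        have : Real.exp (-v) * v ^ (θ / 2) ≤
            Real.exp (-v) * v ^ (θ / 2 - 1) + Real.exp (-v) * v ^ (θ / 2) := by linarith
        exact mul_le_mul_of_nonneg_left this hB0
      calc B * v ^ (θ / 2) * Real.exp (-2 * v) * (6 * Real.exp (-(v - u)))
          = 6 * Real.exp u * (B * (Real.exp (-v) * v ^ (θ / 2)) * Real.exp (-2 * v)) := by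
            rw [hsplit]; ring
        _ ≤ 6 * Real.exp u * (B * (Real.exp (-v) * v ^ (θ / 2)) * 1) := by
            have hbb : (0:ℝ) ≤ B * (Real.exp (-v) * v ^ (θ / 2)) :=
              mul_nonneg hB0 (mul_nonneg (Real.exp_nonneg _) hvθ)
            have h6e : (0:ℝ) ≤ 6 * Real.exp u := by positivity
            exact mul_le_mul_of_nonneg_left (mul_le_mul_of_nonneg_left e1 hbb) h6e
        _ = 6 * Real.exp u * (B * (Real.exp (-v) * v ^ (θ / 2))) := by ring
        _ ≤ 6 * Real.exp u * g v := by
            have h6e : (0:ℝ) ≤ 6 * Real.exp u := by positivity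
            exact mul_le_mul_of_nonneg_left hgv h6e
    have h := norm_integral_le_of_norm_le hgi
      ((ae_restrict_iff' measurableSet_Ioi).2 (ae_of_all _ hb))
    rw [integral_const_mul] at h
    have h2 : |fMinus n u| ≤ 6 * Real.exp u * C0 := by
      simpa [fMinus, Real.norm_eq_abs, hC0def] using h
    linarith [h2]
  refine ⟨6 * C0 + 6, by linarith, ?_, ?_⟩
  · intro u hu
    obtain ⟨hu1, hu2⟩ := hu
    have h := key1 u hu2
    have hu0 : 0 < |u| := abs_pos.2 (ne_of_lt hu2)
    have hu1' : |u| ≤ 1 := by rw [abs_of_neg hu2]; linarith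
    have hlog : 0 ≤ Real.log (1 / |u|) := Real.log_nonneg (one_le_one_div hu0 hu1')
    nlinarith
  · intro u hu
    have h := key2 u hu
    have he := Real.exp_pos u
    nlinarith
end

section
/- Let n ∈ (0,2), θ = (1/π)·arccos(n/2), γ₊ = 2^{3/2}·cos(πθ/2), γ₋ = γ₊ − (2^{3/2}/θ)·sin(πθ/2), and let r₊ be as in the context. Then ∫_0^∞ e^{−v}·r₊(v) dv = 1/2. -/
/-!
The substitution `x = √(1 - e^{-4v})` turns `e^{2v} ± √(e^{4v} - 1)` into `√((1 ± x)/(1 ∓ x))`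
and `e^{-4v} dv` into `x dx / 2`, so with `a = θ/2` the integral is a multiple of
`∫₀¹ x (((1+x)/(1-x))^a - ((1-x)/(1+x))^a) dx`. Folding `[-1, 0]` onto `[0, 1]` and
rescaling `[-1, 1]` to `[0, 1]` makes this
`2 ∫₀¹ (2z - 1) z^a (1-z)^{-a} dz = 2 (2 B(a+2, 1-a) - B(a+1, 1-a))`, which is
`2 a² π / sin (π a)` by Euler's reflection formula. The prefactor of `r₊` is exactly
`2 sin (π a) / (π θ²)`, leaving `2 a² / θ² = 1/2`.
-/

open Real MeasureTheory Filter Topology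

lemma integral_rpow_mul_one_sub_rpow {p q : ℝ} (hp : 0 < p) (hq : 0 < q) :
    ∫ x in (0 : ℝ)..1, x ^ (p - 1) * (1 - x) ^ (q - 1) = Gamma p * Gamma q / Gamma (p + q) := by
  have hB : Complex.betaIntegral p q =
      ↑(∫ x in (0 : ℝ)..1, x ^ (p - 1) * (1 - x) ^ (q - 1)) := by
    rw [Complex.betaIntegral, ← intervalIntegral.integral_ofReal]
    refine intervalIntegral.integral_congr fun x hx => ?_
    rw [Set.uIcc_of_le zero_le_one] at hx
    push_cast [Complex.ofReal_cpow hx.1, Complex.ofReal_cpow (sub_nonneg.2 hx.2)]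
    rfl
  have h := Complex.betaIntegral_eq_Gamma_mul_div p q (by simpa) (by simpa)
  rw [hB, ← Complex.ofReal_add, Complex.Gamma_ofReal, Complex.Gamma_ofReal,
    Complex.Gamma_ofReal] at h
  exact_mod_cast h

lemma IntervalIntegrable.mul_one_sub_rpow {g : ℝ → ℝ} (hg : Continuous g) {q : ℝ}
    (hq : -1 < q) (a b : ℝ) : IntervalIntegrable (fun x => g x * (1 - x) ^ q) volume a b := by
  have h : IntervalIntegrable (fun x : ℝ => (1 - x) ^ q) volume a b := by
    simpa using
      (intervalIntegral.intervalIntegrable_rpow' hq (a := 1 - a) (b := 1 - b)).comp_sub_left 1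
  exact h.continuousOn_mul hg.continuousOn

lemma integral_two_mul_sub_one_mul_rpow_mul_one_sub_rpow_neg {a : ℝ} (ha₀ : 0 < a)
    (ha₁ : a < 1) :
    ∫ z in (0 : ℝ)..1, (2 * z - 1) * (z ^ a * (1 - z) ^ (-a)) = a ^ 2 * π / sin (π * a) := by
  have hsplit : ∀ z ∈ Set.uIcc (0 : ℝ) 1, (2 * z - 1) * (z ^ a * (1 - z) ^ (-a)) =
      2 * (z ^ (a + 2 - 1) * (1 - z) ^ (1 - a - 1)) -
        z ^ (a + 1 - 1) * (1 - z) ^ (1 - a - 1) := by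
    intro z hz
    rw [Set.uIcc_of_le zero_le_one] at hz
    rw [show a + 2 - 1 = a + 1 by ring, show (1 : ℝ) - a - 1 = -a by ring, add_sub_cancel_right,
      rpow_add_one' hz.1 (by linarith)]
    ring
  have hint : ∀ b : ℝ, 0 ≤ b →
      IntervalIntegrable (fun z : ℝ => z ^ b * (1 - z) ^ (1 - a - 1)) volume 0 1 := fun b hb =>
    IntervalIntegrable.mul_one_sub_rpow (continuous_rpow_const hb) (by linarith) 0 1
  rw [intervalIntegral.integral_congr hsplit,
    intervalIntegral.integral_sub ((hint _ (by linarith)).const_mul 2) (hint _ (by linarith)),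
    intervalIntegral.integral_const_mul,
    integral_rpow_mul_one_sub_rpow (by linarith) (by linarith),
    integral_rpow_mul_one_sub_rpow (by linarith) (by linarith),
    show a + 2 + (1 - a) = 2 + 1 by ring, show a + 1 + (1 - a) = 1 + 1 by ring,
    show a + 2 = a + 1 + 1 by ring, Gamma_add_one (by linarith), Gamma_add_one ha₀.ne',
    Gamma_add_one two_ne_zero, Gamma_add_one one_ne_zero, Gamma_two, Gamma_one]
  linear_combination a ^ 2 * Gamma_mul_Gamma_one_sub a

lemma intervalIntegral.integral_add_comp_neg {E : Type*} [NormedAddCommGroup E] [NormedSpace ℝ E]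
    {f : ℝ → E} {b : ℝ}
    (h₁ : IntervalIntegrable f volume (-b) 0) (h₂ : IntervalIntegrable f volume 0 b) :
    ∫ x in (0 : ℝ)..b, (f x + f (-x)) = ∫ x in -b..b, f x := by
  have h₁' : IntervalIntegrable (fun x => f (-x)) volume 0 b := by
    simpa using ((IntervalIntegrable.iff_comp_neg).1 h₁).symm
  rw [intervalIntegral.integral_add h₂ h₁', intervalIntegral.integral_comp_neg, neg_zero,
    add_comm, intervalIntegral.integral_add_adjacent_intervals h₁ h₂]

noncomputable def ratioPowDiff (a x : ℝ) : ℝ :=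
  (1 + x) ^ a * (1 - x) ^ (-a) - (1 - x) ^ a * (1 + x) ^ (-a)

lemma integral_mul_ratioPowDiff {a : ℝ} (ha₀ : 0 < a) (ha₁ : a < 1) :
    ∫ x in (0 : ℝ)..1, x * ratioPowDiff a x = 2 * (a ^ 2 * π / sin (π * a)) := by
  set F : ℝ → ℝ := fun x => x * (1 + x) ^ a * (1 - x) ^ (-a)
  have hF : ∀ c d, IntervalIntegrable F volume c d :=
    IntervalIntegrable.mul_one_sub_rpow
      (by fun_prop (disch := intros; positivity) : Continuous fun x : ℝ => x * (1 + x) ^ a)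
      (by linarith)
  have hrescale : ∀ z ∈ Set.uIcc (0 : ℝ) 1,
      F (2 * z - 1) = (2 * z - 1) * (z ^ a * (1 - z) ^ (-a)) := by
    intro z hz
    rw [Set.uIcc_of_le zero_le_one] at hz
    simp only [F, show 1 + (2 * z - 1) = 2 * z by ring, show 1 - (2 * z - 1) = 2 * (1 - z) by ring,
      mul_rpow zero_le_two hz.1, mul_rpow zero_le_two (sub_nonneg.2 hz.2),
      rpow_neg zero_le_two]
    field_simp
  calc ∫ x in (0 : ℝ)..1, x * ratioPowDiff a x
      = ∫ x in (0 : ℝ)..1, (F x + F (-x)) := by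
        congr 1; ext x; simp only [F, ratioPowDiff, sub_neg_eq_add, ← sub_eq_add_neg]; ring
    _ = ∫ x in (-1 : ℝ)..1, F x := intervalIntegral.integral_add_comp_neg (hF _ _) (hF _ _)
    _ = 2 * ∫ z in (0 : ℝ)..1, F (2 * z - 1) := by
        rw [intervalIntegral.integral_comp_mul_sub F two_ne_zero]; norm_num; ring
    _ = 2 * (a ^ 2 * π / sin (π * a)) := by
        rw [intervalIntegral.integral_congr hrescale,
          integral_two_mul_sub_one_mul_rpow_mul_one_sub_rpow_neg ha₀ ha₁]

noncomputable def sqrtOneSubExp (v : ℝ) : ℝ := √(1 - exp (-4 * v))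

lemma exp_neg_four_mul_lt_one {v : ℝ} (hv : 0 < v) : exp (-4 * v) < 1 :=
  exp_lt_one_iff.2 (by linarith)

lemma sqrtOneSubExp_lt_one (v : ℝ) : sqrtOneSubExp v < 1 :=
  (sqrt_lt' one_pos).2 (by linarith [exp_pos (-4 * v)])

lemma sqrtOneSubExp_pos {v : ℝ} (hv : 0 < v) : 0 < sqrtOneSubExp v :=
  sqrt_pos.2 (by linarith [exp_neg_four_mul_lt_one hv])

lemma one_sub_sqrtOneSubExp_mul_one_add {v : ℝ} (hv : 0 ≤ v) :
    (1 - sqrtOneSubExp v) * (1 + sqrtOneSubExp v) = exp (-4 * v) := by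
  have h := sq_sqrt (sub_nonneg.2 (exp_le_one_iff.2 (by linarith : -4 * v ≤ 0)))
  rw [sqrtOneSubExp]
  linear_combination -h

lemma strictMonoOn_sqrtOneSubExp : StrictMonoOn sqrtOneSubExp (Set.Ici 0) := by
  intro u hu v _ huv
  have hu' : -4 * u ≤ 0 := by linarith [Set.mem_Ici.1 hu]
  have := exp_lt_exp.2 (by linarith : -4 * v < -4 * u)
  exact sqrt_lt_sqrt (sub_nonneg.2 (exp_le_one_iff.2 hu')) (by linarith)

lemma sqrtOneSubExp_image_Ioi : sqrtOneSubExp '' Set.Ioi 0 = Set.Ioo 0 1 := by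
  refine subset_antisymm ?_ fun x ⟨hx₀, hx₁⟩ => ⟨-log (1 - x ^ 2) / 4, ?_, ?_⟩
  · rintro _ ⟨v, hv, rfl⟩
    exact ⟨sqrtOneSubExp_pos hv, sqrtOneSubExp_lt_one v⟩
  · have : log (1 - x ^ 2) < 0 := log_neg (by nlinarith) (by nlinarith)
    simp only [Set.mem_Ioi]
    linarith
  · rw [sqrtOneSubExp, show -4 * (-log (1 - x ^ 2) / 4) = log (1 - x ^ 2) by ring,
      exp_log (by nlinarith), sub_sub_cancel, sqrt_sq hx₀.le]

lemma hasDerivAt_sqrtOneSubExp {v : ℝ} (hv : 0 < v) :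
    HasDerivAt sqrtOneSubExp (2 * exp (-4 * v) / sqrtOneSubExp v) v := by
  have h := (((hasDerivAt_id' v).const_mul (-4)).exp.const_sub 1).sqrt
    (sub_pos.2 (exp_neg_four_mul_lt_one hv)).ne'
  exact h.congr_deriv (by rw [sqrtOneSubExp]; ring)

lemma integral_comp_sqrtOneSubExp (g : ℝ → ℝ) :
    ∫ v in Set.Ioi 0, 2 * exp (-4 * v) / sqrtOneSubExp v * g (sqrtOneSubExp v) =
      ∫ x in Set.Ioo 0 1, g x := by
  rw [← sqrtOneSubExp_image_Ioi, integral_image_eq_integral_abs_deriv_smul measurableSet_Ioi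
    (fun v hv => (hasDerivAt_sqrtOneSubExp hv).hasDerivWithinAt)
    (strictMonoOn_sqrtOneSubExp.injOn.mono Set.Ioi_subset_Ici_self)]
  refine setIntegral_congr_fun measurableSet_Ioi fun v hv => ?_
  rw [abs_of_pos (by have := sqrtOneSubExp_pos hv; positivity), smul_eq_mul]

lemma mul_rpow_of_sq_mul_mul_eq_one {s p q : ℝ} (hs : 0 < s) (hp : 0 < p) (hq : 0 < q)
    (h : s ^ 2 * (p * q) = 1) (b : ℝ) : (s * p) ^ b = p ^ (b / 2) * q ^ (-(b / 2)) := by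
  have hlog : 2 * log s + log p + log q = 0 := by
    have := congrArg log h
    rwa [log_mul (by positivity) (by positivity), log_mul hp.ne' hq.ne', log_pow, log_one,
      Nat.cast_ofNat, ← add_assoc] at this
  rw [rpow_def_of_pos (mul_pos hs hp), rpow_def_of_pos hp, rpow_def_of_pos hq, ← exp_add,
    log_mul hs.ne' hp.ne']
  congr 1
  linear_combination (b / 2) * hlog

lemma sqrt_exp_four_mul_sub_one (v : ℝ) :
    √(exp (4 * v) - 1) = exp (2 * v) * sqrtOneSubExp v := by
  rw [sqrtOneSubExp, ← sqrt_sq (exp_pos (2 * v)).le, ← sqrt_mul (sq_nonneg _)]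
  have h4 : exp (2 * v) ^ 2 = exp (4 * v) := by rw [sq, ← exp_add]; ring_nf
  rw [h4, mul_sub, mul_one, ← exp_add, show 4 * v + -4 * v = 0 by ring, exp_zero]

lemma exp_two_mul_add_sqrt_rpow_sub {v : ℝ} (hv : 0 ≤ v) (b : ℝ) :
    (exp (2 * v) + √(exp (4 * v) - 1)) ^ b - (exp (2 * v) - √(exp (4 * v) - 1)) ^ b =
      ratioPowDiff (b / 2) (sqrtOneSubExp v) := by
  have hx := one_sub_sqrtOneSubExp_mul_one_add hv
  rw [sqrt_exp_four_mul_sub_one]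
  set x := sqrtOneSubExp v
  have hx₀ : 0 ≤ x := sqrt_nonneg _
  have hx₁ : x < 1 := sqrtOneSubExp_lt_one v
  have hs : exp (2 * v) ^ 2 * ((1 - x) * (1 + x)) = 1 := by
    rw [hx, sq, ← exp_add, ← exp_add, show 2 * v + 2 * v + -4 * v = 0 by ring, exp_zero]
  rw [← mul_one_add, ← mul_one_sub, ratioPowDiff,
    mul_rpow_of_sq_mul_mul_eq_one (p := 1 + x) (q := 1 - x) (exp_pos _) (by linarith) (by linarith)
      (by rwa [mul_comm (1 + x)]),
    mul_rpow_of_sq_mul_mul_eq_one (exp_pos _) (by linarith) (by linarith) hs]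

lemma gammaP_sub_gammaM_div (n : ℝ) :
    (gammaP n - gammaM n) / (√2 * π * theta n) =
      2 * sin (π * (theta n / 2)) / (π * theta n ^ 2) := by
  have h : (2 : ℝ) ^ ((3 : ℝ) / 2) = 2 * √2 := by
    rw [show (3 : ℝ) / 2 = 1 + 1 / 2 by norm_num, rpow_add two_pos, rpow_one, sqrt_eq_rpow]
  rw [gammaM, sub_sub_cancel, h, mul_div_assoc π]
  field_simp

lemma exp_neg_mul_rPlus (n : ℝ) {v : ℝ} (hv : 0 < v) :
    exp (-v) * rPlus n v = sin (π * (theta n / 2)) / (π * theta n ^ 2) *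
      (2 * exp (-4 * v) / sqrtOneSubExp v *
        (sqrtOneSubExp v * ratioPowDiff (theta n / 2) (sqrtOneSubExp v))) := by
  have hx := (sqrtOneSubExp_pos hv).ne'
  have hexp : exp (-4 * v) = exp (-v) * exp (-3 * v) := by rw [← exp_add]; ring_nf
  rw [rPlus, gammaP_sub_gammaM_div, exp_two_mul_add_sqrt_rpow_sub hv.le, hexp]
  field_simp

/-- Normalisation (N̂): ∫_0^∞ e^{−v}·r₊(v) dv = 1/2. -/
theorem rPlus_normalisation (n : ℝ) (hn : n ∈ Set.Ioo (0 : ℝ) 2) :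
    ∫ v in Set.Ioi (0 : ℝ), Real.exp (-v) * rPlus n v = 1 / 2 := by
  have hθ₀ : 0 < theta n := div_pos (arccos_pos.2 (by linarith [hn.2])) pi_pos
  have hθ₁ : theta n ≤ 1 := div_le_one_of_le₀ (arccos_le_pi _) pi_pos.le
  have hsin : 0 < sin (π * theta n / 2) :=
    sin_pos_of_pos_of_lt_pi (by positivity) (by nlinarith [pi_pos])
  rw [setIntegral_congr_fun measurableSet_Ioi fun v hv => exp_neg_mul_rPlus n hv,
    integral_const_mul, integral_comp_sqrtOneSubExp fun x => x * ratioPowDiff (theta n / 2) x,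
    ← integral_Ioc_eq_integral_Ioo, ← intervalIntegral.integral_of_le zero_le_one,
    integral_mul_ratioPowDiff (by positivity) (by linarith)]
  field_simp [hsin.ne']
end
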